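/- The convexity property of Theorem 1 fails for the odd orthogonal group SO(2l+1), l ≥ 2: with V = V(ω_1) the standard representation, both V(0) and V(2ω_1) occur in V ⊗ V, and 2ω_1 = 0 + 2·ω_1 with ω_1 in the root lattice, but V(ω_1) does not occur in V ⊗ V. -/

import Mathlib

/-!
The convexity property of Theorem 1 fails for the odd orthogonal group `SO(2l+1)`, `l ≥ 2`:
with `V = V(ω₁)` the standard representation, both `V(0)` and `V(2ω₁)` occur in `V ⊗ V`, and
`2ω₁ = 0 + 2·ω₁` with `ω₁ = e₁` in the root lattice (it is a short root), but `V(ω₁)` does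
not occur in `V ⊗ V`.
-/

open scoped TensorProduct
open Matrix

section OrthFramework

/-- The Gram matrix (antidiagonal `1`s) of the split non-degenerate quadratic form on `ℂ^m`;
over `ℂ` every non-degenerate quadratic form is equivalent to this one. -/
def antidiagJ (m : ℕ) : Matrix (Fin m) (Fin m) ℂ :=
  Matrix.of fun i j => if (i : ℕ) + (j : ℕ) + 1 = m then 1 else 0

/-- The orthogonal group `O(Ψ) ⊆ GL(m, ℂ)` of the split form `Ψ`. -/
def orthGroup (m : ℕ) : Subgroup (GL (Fin m) ℂ) where
  carrier := {g | ((g : GL (Fin m) ℂ) : Matrix (Fin m) (Fin m) ℂ)ᵀ * antidiagJ m *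
      ((g : GL (Fin m) ℂ) : Matrix (Fin m) (Fin m) ℂ) = antidiagJ m}
  one_mem' := by simp
  mul_mem' := by
    intro a b ha hb
    simp only [Set.mem_setOf_eq, Units.val_mul, Matrix.transpose_mul] at *
    calc (↑b)ᵀ * (↑a)ᵀ * antidiagJ m * ((↑a : Matrix (Fin m) (Fin m) ℂ) * ↑b)
        = (↑b)ᵀ * ((↑a)ᵀ * antidiagJ m * ↑a) * ↑b := by
          simp only [Matrix.mul_assoc]
      _ = antidiagJ m := by rw [ha, hb]
  inv_mem' := by
    intro g hg
    simp only [Set.mem_setOf_eq] at *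
    set A : Matrix (Fin m) (Fin m) ℂ := ((g : GL (Fin m) ℂ) : Matrix (Fin m) (Fin m) ℂ)
    set B : Matrix (Fin m) (Fin m) ℂ := ((g⁻¹ : GL (Fin m) ℂ) : Matrix (Fin m) (Fin m) ℂ)
    have hgg' : A * B = 1 := by
      simp only [A, B, ← Units.val_mul, mul_inv_cancel, Units.val_one]
    calc Bᵀ * antidiagJ m * B
        = Bᵀ * (Aᵀ * antidiagJ m * A) * B := by rw [hg]
      _ = (A * B)ᵀ * antidiagJ m * (A * B) := by
          rw [Matrix.transpose_mul]; simp only [Matrix.mul_assoc]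
      _ = antidiagJ m := by rw [hgg']; simp
  
/-- The special orthogonal group `SO(Ψ) ⊆ GL(m, ℂ)`. -/
def specialOrthGroup (m : ℕ) : Subgroup (GL (Fin m) ℂ) :=
  orthGroup m ⊓ (Matrix.GeneralLinearGroup.det : GL (Fin m) ℂ →* ℂˣ).ker

variable {m : ℕ} {G : Subgroup (GL (Fin m) ℂ)}
variable {V W : Type*} [AddCommGroup V] [Module ℂ V] [AddCommGroup W] [Module ℂ W]

/-- The standard (matrix) representation of a subgroup `G ⊆ GL(m, ℂ)` on `ℂ^m`. -/
noncomputable def stdRep (G : Subgroup (GL (Fin m) ℂ)) : Representation ℂ G (Fin m → ℂ) where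
  toFun g := Matrix.toLin' ((g : GL (Fin m) ℂ) : Matrix (Fin m) (Fin m) ℂ)
  map_one' := by simp; rfl
  map_mul' g h := by
    simp [Units.val_mul, Matrix.toLin'_mul]
    rfl

/-- An element of `G ⊆ GL(m, ℂ)` lying in the diagonal torus. -/
def GIsDiag (g : G) : Prop :=
  ∀ i j, i ≠ j → ((g : GL (Fin m) ℂ) : Matrix (Fin m) (Fin m) ℂ) i j = 0

/-- An element of `G ⊆ GL(m, ℂ)` lying in the upper-triangular unipotent subgroup. -/
def GIsUniUpper (g : G) : Prop :=
  (∀ i, ((g : GL (Fin m) ℂ) : Matrix (Fin m) (Fin m) ℂ) i i = 1) ∧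
    ∀ i j : Fin m, j < i → ((g : GL (Fin m) ℂ) : Matrix (Fin m) (Fin m) ℂ) i j = 0

/-- `ρ` is irreducible. -/
def RepIsIrred (ρ : Representation ℂ G V) : Prop :=
  (∃ v : V, v ≠ 0) ∧ ∀ p : Submodule ℂ V, (∀ g, ∀ x ∈ p, ρ g x ∈ p) → p = ⊥ ∨ p = ⊤

/-- The space of `G`-invariants of `ρ` is nonzero. -/
def RepHasInvariant (ρ : Representation ℂ G V) : Prop := ∃ v : V, v ≠ 0 ∧ ∀ g, ρ g v = v

/-- The tensor product of two representations, with the diagonal `G`-action. -/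
noncomputable def tensorRep2 (ρ : Representation ℂ G V) (σ : Representation ℂ G W) :
    Representation ℂ G (V ⊗[ℂ] W) := ρ.tprod σ

end OrthFramework

section BWeights

variable {l : ℕ} {G : Subgroup (GL (Fin (2 * l + 1)) ℂ)}
variable {V : Type*} [AddCommGroup V] [Module ℂ V]

/-- For `G ⊆ GL(2l+1, ℂ)` of type `B_l` (the split (special) orthogonal group), a weight
`a ∈ ℤ^l` of the diagonal torus `diag(d₁, …, d_l, 1, d_l⁻¹, …, d₁⁻¹)` evaluates on a diagonal
element through the first `l` diagonal entries: `g ↦ ∏ᵢ gᵢᵢ^{aᵢ}`.  `v` is a highest weight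
vector of weight `a`: nonzero, fixed by the unipotent radical of the Borel, torus-eigenvector
with character `a`. -/
def BIsHWVector (ρ : Representation ℂ G V) (a : Fin l → ℤ) (v : V) : Prop :=
  v ≠ 0 ∧ (∀ g, GIsUniUpper g → ρ g v = v) ∧
    ∀ g, GIsDiag g → ρ g v =
      (∏ i : Fin l, ((g : GL (Fin (2 * l + 1)) ℂ) : Matrix (Fin (2 * l + 1)) (Fin (2 * l + 1)) ℂ)
        (Fin.castLE (by omega) i) (Fin.castLE (by omega) i) ^ a i) • v

/-- The irreducible representation `V(a)` of highest weight `a` occurs in `ρ`. -/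
def BOccurs (ρ : Representation ℂ G V) (a : Fin l → ℤ) : Prop := ∃ v, BIsHWVector ρ a v

/-- The roots of type `B_l`, as integer vectors: `±eᵢ ± eⱼ (i ≠ j)` and `±eᵢ`. -/
def BRootsZ (l : ℕ) : Set (Fin l → ℤ) :=
  {v | (∃ i j : Fin l, i ≠ j ∧
          (v = Pi.single i 1 - Pi.single j 1 ∨ v = Pi.single i 1 + Pi.single j 1 ∨
           v = -(Pi.single i 1) - Pi.single j 1)) ∨
       (∃ i : Fin l, v = Pi.single i 1 ∨ v = -(Pi.single i 1))}

end BWeights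

/-!
Identify `V ⊗ V` with matrices through `x ⊗ y ↦ x yᵀ`; then `g` acts by `X ↦ g X gᵀ`. The Gram
matrix `J` of the form is invariant, which gives `V(0)`, and `e₁ ⊗ e₁` is a highest weight vector
of weight `2ω₁`. For `ω₁`, one generic element `diag(2^(2i+1))` of the torus forces a vector of
weight `ω₁` into the span of `e₁ ⊗ e_{l+1}` and `e_{l+1} ⊗ e₁`, where `e_{l+1}` spans the zero
weight space of `V`. The unipotent element `exp` of the root vector of the short root `ε₂` (this
needs `l ≥ 2`) fixes `e₁` and sends `e_{l+1}` to `e_{l+1} + e₂`, so it moves every nonzero vector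
of that span.
-/

lemma prod_zpow_ite_val_eq_zero {M : Type*} [DivisionCommMonoid M] {n : ℕ} (hn : 0 < n)
    (f : Fin n → M) (k : ℤ) : ∏ i, f i ^ (if (i : ℕ) = 0 then k else 0) = f ⟨0, hn⟩ ^ k := by
  rw [Finset.prod_eq_single ⟨0, hn⟩
    (fun i _ hi => by rw [if_neg (Fin.ext_iff.not.mp hi), zpow_zero]) (by simp)]
  rfl

lemma two_zpow_eq_two_iff {n : ℤ} : (2 : ℂ) ^ n = 2 ↔ n = 1 := by
  constructor
  · intro h
    have : (((2 : ℝ) ^ n : ℝ) : ℂ) = ((2 : ℝ) ^ (1 : ℤ) : ℝ) := by push_cast; rwa [zpow_one]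
    exact (zpow_right_inj₀ two_pos (by norm_num)).mp (Complex.ofReal_injective this)
  · rintro rfl; exact zpow_one 2

section TensorMatrix

variable {R n : Type*} [CommRing R] [Fintype n] [DecidableEq n]

noncomputable def tensorToMatrix : (n → R) ⊗[R] (n → R) ≃ₗ[R] Matrix n n R :=
  TensorProduct.piScalarRight R R (n → R) n ≪≫ₗ ofLinearEquiv R ≪≫ₗ
    transposeLinearEquiv n n R R

@[simp]
lemma tensorToMatrix_tmul (x y : n → R) : tensorToMatrix (x ⊗ₜ[R] y) = vecMulVec x y := by
  ext i j
  simp [tensorToMatrix, ofLinearEquiv, vecMulVec_apply, mul_comm]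

lemma mul_single_mul_transpose_apply (A : Matrix n n R) (p q : n) (c : R) (i j : n) :
    (A * single p q c * Aᵀ) i j = A i p * c * A j q := by
  simp [mul_apply, single_apply, ite_and]

end TensorMatrix

section Orth

variable {m : ℕ}

lemma antidiagJ_eq_toMatrix_revPerm :
    antidiagJ m = (Fin.revPerm.toPEquiv.toMatrix : Matrix (Fin m) (Fin m) ℂ) := by
  ext i j
  have := i.is_lt
  simp only [antidiagJ, of_apply, PEquiv.toMatrix_apply, Equiv.toPEquiv_apply, Option.mem_def,
    Option.some.injEq, Fin.revPerm_apply, Fin.ext_iff, Fin.val_rev]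
  congr 1
  apply propext
  omega

lemma antidiagJ_apply (i j : Fin m) : antidiagJ m i j = if j = i.rev then 1 else 0 := by
  simp [antidiagJ_eq_toMatrix_revPerm, eq_comm]

lemma antidiagJ_mul_single (i j : Fin m) (c : ℂ) :
    antidiagJ m * single i j c = single i.rev j c := by
  rw [antidiagJ_eq_toMatrix_revPerm, PEquiv.toMatrix_toPEquiv_mul]
  simpa using submatrix_single_equiv Fin.revPerm (Equiv.refl _) i j c

lemma single_mul_antidiagJ (i j : Fin m) (c : ℂ) :
    single i j c * antidiagJ m = single i j.rev c := by
  rw [antidiagJ_eq_toMatrix_revPerm, PEquiv.mul_toMatrix_toPEquiv]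
  simpa using submatrix_single_equiv (Equiv.refl _) Fin.revPerm i j c

lemma antidiagJ_mul_self : antidiagJ m * antidiagJ m = 1 := by
  ext i j
  simp [antidiagJ_eq_toMatrix_revPerm, PEquiv.toMatrix_toPEquiv_mul, one_apply]

lemma mul_antidiagJ_mul_transpose {A : Matrix (Fin m) (Fin m) ℂ}
    (hA : Aᵀ * antidiagJ m * A = antidiagJ m) : A * antidiagJ m * Aᵀ = antidiagJ m := by
  have hleft : (antidiagJ m * Aᵀ * antidiagJ m) * A = 1 := by
    rw [Matrix.mul_assoc, Matrix.mul_assoc, ← Matrix.mul_assoc Aᵀ, hA, antidiagJ_mul_self]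
  calc A * antidiagJ m * Aᵀ = (A * (antidiagJ m * Aᵀ * antidiagJ m)) * antidiagJ m := by
        simp only [Matrix.mul_assoc, antidiagJ_mul_self, Matrix.mul_one]
    _ = antidiagJ m := by rw [mul_eq_one_comm.mp hleft, Matrix.one_mul]

lemma mem_specialOrthGroup_iff {g : GL (Fin m) ℂ} :
    g ∈ specialOrthGroup m ↔ g.1ᵀ * antidiagJ m * g.1 = antidiagJ m ∧ g.1.det = 1 := by
  rw [specialOrthGroup, Subgroup.mem_inf, MonoidHom.mem_ker, Units.ext_iff,
    Matrix.GeneralLinearGroup.val_det_apply]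
  rfl

noncomputable def specialOrthGroup.ofMatrix (A : Matrix (Fin m) (Fin m) ℂ)
    (hA : Aᵀ * antidiagJ m * A = antidiagJ m) (hdet : A.det = 1) : specialOrthGroup m :=
  ⟨.mkOfDetNeZero A (by simp [hdet]), mem_specialOrthGroup_iff.mpr ⟨hA, hdet⟩⟩

@[simp]
lemma specialOrthGroup.ofMatrix_val (A : Matrix (Fin m) (Fin m) ℂ)
    (hA : Aᵀ * antidiagJ m * A = antidiagJ m) (hdet : A.det = 1) :
    (specialOrthGroup.ofMatrix A hA hdet).1.1 = A :=
  rfl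

lemma antidiagJ_ne_zero [NeZero m] : antidiagJ m ≠ 0 := fun h => by
  simpa [antidiagJ_apply] using congrFun (congrFun h 0) (Fin.rev 0)

section Torus

variable {c : ℂ} {w : Fin m → ℤ}

variable (hc : c ≠ 0) (hw : ∀ i, w i.rev = -w i)
include hc hw

lemma zpow_mul_zpow_rev (i : Fin m) : c ^ w i * c ^ w i.rev = 1 := by
  rw [hw, ← zpow_add₀ hc, add_neg_cancel, zpow_zero]

lemma diagonal_zpow_transpose_mul_antidiagJ_mul :
    (diagonal fun i => c ^ w i)ᵀ * antidiagJ m * diagonal (fun i => c ^ w i) = antidiagJ m := by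
  ext i j
  rw [diagonal_transpose, mul_diagonal, diagonal_mul, antidiagJ_apply]
  split_ifs with hj
  · rw [hj, mul_one, zpow_mul_zpow_rev hc hw]
  · simp

lemma det_diagonal_zpow : (diagonal fun i => c ^ w i).det = 1 := by
  rw [det_diagonal]
  refine Finset.prod_involution (fun i _ => i.rev) (fun i _ => zpow_mul_zpow_rev hc hw i)
    (fun i _ hi hfix => hi ?_) (fun i _ => Finset.mem_univ _) (fun i _ => Fin.rev_rev i)
  have hwi : w i = 0 := by have := hw i; rw [hfix] at this; omega
  rw [hwi, zpow_zero]

end Torus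

end Orth

section StdRep

variable {m : ℕ} {G : Subgroup (GL (Fin m) ℂ)}

lemma stdRep_apply (g : G) (x : Fin m → ℂ) : stdRep G g x = g.1.1 *ᵥ x :=
  rfl

lemma tensorToMatrix_tensorRep2_stdRep (g : G) (v : (Fin m → ℂ) ⊗[ℂ] (Fin m → ℂ)) :
    tensorToMatrix (tensorRep2 (stdRep G) (stdRep G) g v) =
      g.1.1 * tensorToMatrix v * g.1.1ᵀ := by
  induction v using TensorProduct.induction_on with
  | zero => simp
  | tmul x y =>
    simp [tensorRep2, Representation.tprod_apply, stdRep_apply, mul_vecMulVec, vecMulVec_mul,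
      vecMul_transpose]
  | add v w hv hw => simp [hv, hw, Matrix.mul_add, Matrix.add_mul]

lemma stdRep_single_of_isDiag {g : G} (hg : GIsDiag g) (j : Fin m) :
    stdRep G g (Pi.single j 1) = g.1.1 j j • Pi.single j 1 := by
  ext i
  rw [stdRep_apply, mulVec_single_one]
  by_cases hij : i = j
  · subst hij; simp
  · simp [hg i j hij, hij]

lemma stdRep_single_zero_of_isUniUpper [NeZero m] {g : G} (hg : GIsUniUpper g) :
    stdRep G g (Pi.single 0 1) = Pi.single 0 1 := by
  ext i
  rw [stdRep_apply, mulVec_single_one]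
  rcases (Fin.zero_le i).eq_or_lt with rfl | hi
  · simpa using hg.1 0
  · simp [hg.2 i 0 hi, hi.ne']

lemma tensorRep2_stdRep_symm_antidiagJ (g : G) (hg : g.1 ∈ orthGroup m) :
    tensorRep2 (stdRep G) (stdRep G) g (tensorToMatrix.symm (antidiagJ m)) =
      tensorToMatrix.symm (antidiagJ m) := by
  apply tensorToMatrix.injective
  rw [tensorToMatrix_tensorRep2_stdRep, LinearEquiv.apply_symm_apply]
  exact mul_antidiagJ_mul_transpose hg

end StdRep

section TruncExp

variable {K n : Type*} [Field K] [Fintype n] [DecidableEq n]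

-- `exp N` for `N` with `N ^ 3 = 0`.
def truncExp (N : Matrix n n K) : Matrix n n K := 1 + N + (2 : K)⁻¹ • (N * N)

lemma truncExp_transpose_mul_mul [NeZero (2 : K)] {N J : Matrix n n K} (hN : Nᵀ * J = -(J * N))
    (hN3 : N * N * N = 0) : (truncExp N)ᵀ * J * truncExp N = J := by
  have hN2 : Nᵀ * Nᵀ * J = J * (N * N) := by
    rw [Matrix.mul_assoc, hN, Matrix.mul_neg, ← Matrix.mul_assoc, hN]; simp [Matrix.mul_assoc]
  have hleft : (truncExp N)ᵀ * J = J * (1 - N + (2 : K)⁻¹ • (N * N)) := by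
    simp only [truncExp, transpose_add, transpose_one, transpose_smul, transpose_mul,
      Matrix.add_mul, Matrix.smul_mul, hN, hN2, Matrix.one_mul, Matrix.mul_add, Matrix.mul_sub,
      Matrix.mul_one, Matrix.mul_smul]
    abel
  have hN3' : N * (N * N) = 0 := by rw [← Matrix.mul_assoc, hN3]
  rw [hleft, Matrix.mul_assoc, truncExp]
  convert Matrix.mul_one J using 2
  simp only [Matrix.sub_mul, Matrix.add_mul, Matrix.mul_add, Matrix.smul_mul, Matrix.mul_smul,
    Matrix.one_mul, Matrix.mul_one, Matrix.mul_assoc, hN3', Matrix.mul_zero, smul_zero]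
  match_scalars <;> field_simp <;> norm_num

end TruncExp

section RootElement

variable {m : ℕ} {a b : Fin m}

-- For the index `b` of the zero weight, the root vector of the short root `ε_{a+1}` in `so(J)`.
def rootNilpotent (a b : Fin m) : Matrix (Fin m) (Fin m) ℂ := single a b 1 - single b a.rev 1

lemma rootNilpotent_transpose_mul_antidiagJ (hb : b.rev = b) :
    (rootNilpotent a b)ᵀ * antidiagJ m = -(antidiagJ m * rootNilpotent a b) := by
  simp only [rootNilpotent, transpose_sub, transpose_single, Matrix.sub_mul, Matrix.mul_sub,
    single_mul_antidiagJ, antidiagJ_mul_single, hb]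
  abel

variable (hab : a < b) (hb : b.rev = b)
include hab hb

lemma lt_rev_of_lt_of_rev_eq : b < a.rev := by
  rw [← hb]; exact Fin.rev_lt_rev.mpr hab

lemma rootNilpotent_mul_self : rootNilpotent a b * rootNilpotent a b = -single a a.rev 1 := by
  have hbr := lt_rev_of_lt_of_rev_eq hab hb
  simp [rootNilpotent, Matrix.sub_mul, Matrix.mul_sub, single_mul_single_of_ne, hab.ne',
    hbr.ne', (hab.trans hbr).ne']

lemma rootNilpotent_cube :
    rootNilpotent a b * rootNilpotent a b * rootNilpotent a b = 0 := by
  have hbr := lt_rev_of_lt_of_rev_eq hab hb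
  rw [rootNilpotent_mul_self hab hb]
  simp [rootNilpotent, Matrix.mul_sub, single_mul_single_of_ne, hbr.ne', (hab.trans hbr).ne']

lemma truncExp_rootNilpotent : truncExp (rootNilpotent a b) =
    1 + single a b 1 - single b a.rev 1 - single a a.rev (2 : ℂ)⁻¹ := by
  rw [truncExp, rootNilpotent_mul_self hab hb, rootNilpotent, smul_neg, smul_single, smul_eq_mul,
    mul_one]
  abel

lemma truncExp_rootNilpotent_isUpperTriangular :
    (truncExp (rootNilpotent a b)).IsUpperTriangular := by
  have hbr := lt_rev_of_lt_of_rev_eq hab hb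
  rw [truncExp_rootNilpotent hab hb]
  exact ((blockTriangular_one.add (blockTriangular_single hab.le _)).sub
    (blockTriangular_single hbr.le _)).sub (blockTriangular_single (hab.trans hbr).le _)

lemma truncExp_rootNilpotent_apply_self (i : Fin m) : truncExp (rootNilpotent a b) i i = 1 := by
  have hbr := lt_rev_of_lt_of_rev_eq hab hb
  have hne : ∀ {j k : Fin m}, j ≠ k → ¬(j = i ∧ k = i) := fun h ⟨hj, hk⟩ => h (hj.trans hk.symm)
  simp [truncExp_rootNilpotent hab hb, hne hab.ne, hne hbr.ne, hne (hab.trans hbr).ne]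

lemma det_truncExp_rootNilpotent : (truncExp (rootNilpotent a b)).det = 1 := by
  rw [det_of_isUpperTriangular (truncExp_rootNilpotent_isUpperTriangular hab hb)]
  simp [truncExp_rootNilpotent_apply_self hab hb]

lemma truncExp_rootNilpotent_apply_left_right : truncExp (rootNilpotent a b) a b = 1 := by
  have hbr := lt_rev_of_lt_of_rev_eq hab hb
  simp [truncExp_rootNilpotent hab hb, one_apply, hab.ne, hbr.ne']

lemma truncExp_rootNilpotent_row {z : Fin m} (hza : z ≠ a) (hzb : z ≠ b) (j : Fin m) :
    truncExp (rootNilpotent a b) z j = (1 : Matrix (Fin m) (Fin m) ℂ) z j := by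
  simp [truncExp_rootNilpotent hab hb, hza.symm, hzb.symm]

lemma eq_zero_of_truncExp_rootNilpotent_conj {z : Fin m} (hza : z < a)
    {X : Matrix (Fin m) (Fin m) ℂ} (hsupp : ∀ p q, ¬(p = z ∧ q = b ∨ p = b ∧ q = z) → X p q = 0)
    (hX : truncExp (rootNilpotent a b) * X * (truncExp (rootNilpotent a b))ᵀ = X) : X = 0 := by
  have hzb := hza.trans hab
  have hdecomp : X = single z b (X z b) + single b z (X b z) := by
    ext p q
    by_cases hpq : p = z ∧ q = b ∨ p = b ∧ q = z
    · rcases hpq with ⟨rfl, rfl⟩ | ⟨rfl, rfl⟩ <;> simp [hzb.ne, hzb.ne']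
    · rw [hsupp p q hpq, Matrix.add_apply, single_apply, single_apply]
      grind
  have hconj : ∀ i j, X i j = truncExp (rootNilpotent a b) i z * X z b *
      truncExp (rootNilpotent a b) j b +
      truncExp (rootNilpotent a b) i b * X b z * truncExp (rootNilpotent a b) j z := by
    intro i j
    conv_lhs => rw [← hX, hdecomp]
    rw [Matrix.mul_add, Matrix.add_mul, Matrix.add_apply, mul_single_mul_transpose_apply,
      mul_single_mul_transpose_apply]
  have hrow := truncExp_rootNilpotent_row hab hb hza.ne hzb.ne
  have hab1 := truncExp_rootNilpotent_apply_left_right hab hb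
  have haz := truncExp_rootNilpotent_isUpperTriangular hab hb hza
  have h1 := hconj z a
  have h2 := hconj a z
  rw [hsupp z a (by simp [hab.ne, hzb.ne])] at h1
  rw [hsupp a z (by simp [hab.ne, hza.ne'])] at h2
  simp [hrow, hab1, haz, hzb.ne] at h1 h2
  rw [hdecomp, ← h1, ← h2]
  simp

noncomputable def rootElement : specialOrthGroup m :=
  specialOrthGroup.ofMatrix (truncExp (rootNilpotent a b))
    (truncExp_transpose_mul_mul (rootNilpotent_transpose_mul_antidiagJ hb)
      (rootNilpotent_cube hab hb))
    (det_truncExp_rootNilpotent hab hb)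

lemma rootElement_isUniUpper : GIsUniUpper (rootElement hab hb) :=
  ⟨truncExp_rootNilpotent_apply_self hab hb, truncExp_rootNilpotent_isUpperTriangular hab hb⟩

end RootElement

section TypeB

variable {l : ℕ}

def midIndex (l : ℕ) : Fin (2 * l + 1) := ⟨l, by omega⟩

lemma rev_midIndex : (midIndex l).rev = midIndex l := by
  ext; simp [midIndex, Fin.val_rev]; omega

-- The cocharacter `t ↦ diag(t^(2i+1))ᵢ` of the maximal torus, as exponents on all coordinates.
-- Its values away from `midIndex l` are odd, so among the weights `(p, q)` of `V ⊗ V` only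
-- `(0, midIndex l)` and `(midIndex l, 0)` pair with it to `1`, like `ω₁`.
def genericCocharacter (l : ℕ) (i : Fin (2 * l + 1)) : ℤ :=
  if (i : ℕ) < l then 2 * i + 1 else if (i : ℕ) = l then 0 else 2 * i - 4 * l - 1

lemma genericCocharacter_rev (i : Fin (2 * l + 1)) :
    genericCocharacter l i.rev = -genericCocharacter l i := by
  have := i.is_lt
  simp only [genericCocharacter, Fin.val_rev]
  split_ifs <;> omega

lemma eq_midIndex_of_genericCocharacter_add_eq_one {p q : Fin (2 * l + 1)}
    (h : genericCocharacter l p + genericCocharacter l q = 1) :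
    p = 0 ∧ q = midIndex l ∨ p = midIndex l ∧ q = 0 := by
  simp only [genericCocharacter, Fin.ext_iff, midIndex, Fin.val_zero] at h ⊢
  split_ifs at h <;> omega

lemma one_lt_midIndex (hl : 2 ≤ l) : (1 : Fin (2 * l + 1)) < midIndex l := by
  rw [Fin.lt_def, Fin.val_one', Nat.mod_eq_of_lt (by omega)]
  exact hl

noncomputable def genericTorusElement (l : ℕ) : specialOrthGroup (2 * l + 1) :=
  specialOrthGroup.ofMatrix (diagonal fun i => (2 : ℂ) ^ genericCocharacter l i)
    (diagonal_zpow_transpose_mul_antidiagJ_mul two_ne_zero genericCocharacter_rev)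
    (det_diagonal_zpow two_ne_zero genericCocharacter_rev)

lemma genericTorusElement_isDiag : GIsDiag (genericTorusElement l) :=
  fun _ _ hij => diagonal_apply_ne _ hij

variable {v : (Fin (2 * l + 1) → ℂ) ⊗[ℂ] (Fin (2 * l + 1) → ℂ)}

lemma tensorToMatrix_apply_eq_zero_of_bIsHWVector_e1 (hl : 0 < l)
    (hv : BIsHWVector (tensorRep2 (stdRep (specialOrthGroup (2 * l + 1)))
      (stdRep (specialOrthGroup (2 * l + 1)))) (fun i => if (i : ℕ) = 0 then 1 else 0) v)
    {p q : Fin (2 * l + 1)} (hpq : ¬(p = 0 ∧ q = midIndex l ∨ p = midIndex l ∧ q = 0)) :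
    tensorToMatrix v p q = 0 := by
  have ht := congrArg (fun x => tensorToMatrix x p q)
    (hv.2.2 (genericTorusElement l) genericTorusElement_isDiag)
  rw [prod_zpow_ite_val_eq_zero hl] at ht
  simp only [tensorToMatrix_tensorRep2_stdRep, genericTorusElement, specialOrthGroup.ofMatrix_val,
    diagonal_transpose, mul_diagonal, diagonal_mul, map_smul, Matrix.smul_apply, smul_eq_mul,
    diagonal_apply_eq, zpow_one] at ht
  rw [show genericCocharacter l (Fin.castLE _ ⟨0, hl⟩) = 1 by simp [genericCocharacter, hl]] at ht
  by_contra hX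
  have hsum : (2 : ℂ) ^ (genericCocharacter l p + genericCocharacter l q) = 2 := by
    rw [zpow_add₀ two_ne_zero]
    exact mul_right_cancel₀ hX (by linear_combination ht)
  exact hpq (eq_midIndex_of_genericCocharacter_add_eq_one (two_zpow_eq_two_iff.mp hsum))

lemma not_bOccurs_tensorRep2_stdRep_e1 (hl : 2 ≤ l) :
    ¬BOccurs (tensorRep2 (stdRep (specialOrthGroup (2 * l + 1)))
      (stdRep (specialOrthGroup (2 * l + 1)))) (fun i => if (i : ℕ) = 0 then 1 else 0) := by
  rintro ⟨v, hv⟩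
  have h1 := one_lt_midIndex hl
  have hfix := congrArg tensorToMatrix (hv.2.1 _ (rootElement_isUniUpper h1 rev_midIndex))
  rw [tensorToMatrix_tensorRep2_stdRep] at hfix
  refine hv.1 (tensorToMatrix.map_eq_zero_iff.mp ?_)
  refine eq_zero_of_truncExp_rootNilpotent_conj h1 rev_midIndex (z := 0) ?_
    (fun p q hpq => tensorToMatrix_apply_eq_zero_of_bIsHWVector_e1 (by omega) hv hpq) hfix
  rw [Fin.lt_def, Fin.val_one', Nat.mod_eq_of_lt (by omega)]
  exact Nat.one_pos

lemma bOccurs_tensorRep2_stdRep_zero :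
    BOccurs (tensorRep2 (stdRep (specialOrthGroup (2 * l + 1)))
      (stdRep (specialOrthGroup (2 * l + 1)))) (fun _ => 0) := by
  have hfix := fun g : specialOrthGroup (2 * l + 1) =>
    tensorRep2_stdRep_symm_antidiagJ g (Subgroup.mem_inf.mp g.2).1
  exact ⟨_, (LinearEquiv.map_ne_zero_iff _).mpr antidiagJ_ne_zero, fun g _ => hfix g,
    fun g _ => by simp [hfix g]⟩

lemma bOccurs_tensorRep2_stdRep_two_e1 (hl : 0 < l) :
    BOccurs (tensorRep2 (stdRep (specialOrthGroup (2 * l + 1)))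
      (stdRep (specialOrthGroup (2 * l + 1)))) (fun i => if (i : ℕ) = 0 then 2 else 0) := by
  refine ⟨Pi.single 0 1 ⊗ₜ Pi.single 0 1, fun h => ?_, fun g hg => ?_, fun g hg => ?_⟩
  · simpa [vecMulVec_apply] using congrArg (fun v => tensorToMatrix v 0 0) h
  · simp [tensorRep2, stdRep_single_zero_of_isUniUpper hg]
  · rw [prod_zpow_ite_val_eq_zero hl, zpow_two, tensorRep2, Representation.tprod_apply,
      TensorProduct.map_tmul, stdRep_single_of_isDiag hg, TensorProduct.smul_tmul_smul]
    rfl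

end TypeB

theorem convexity_fails_SO_odd (l : ℕ) (hl : 2 ≤ l) :
    letI G := specialOrthGroup (2 * l + 1)
    letI τ := tensorRep2 (stdRep G) (stdRep G)
    -- `V(0)` and `V(2ω₁) = V(0 + 2·ω₁)` occur in `V ⊗ V` …
    BOccurs τ (fun _ => 0) ∧
    BOccurs τ (fun i => if (i : ℕ) = 0 then 2 else 0) ∧
    -- … and `ω₁ = e₁` lies in the root lattice of `B_l` …
    (Pi.single (⟨0, by omega⟩ : Fin l) (1 : ℤ) : Fin l → ℤ) ∈ AddSubgroup.closure (BRootsZ l) ∧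
    -- … but the intermediate weight `ω₁`: `V(ω₁)` does not occur in `V ⊗ V`
    ¬ BOccurs τ (fun i => if (i : ℕ) = 0 then 1 else 0) :=
  ⟨bOccurs_tensorRep2_stdRep_zero, bOccurs_tensorRep2_stdRep_two_e1 (by omega),
    AddSubgroup.subset_closure (Or.inr ⟨_, Or.inl rfl⟩),
    not_bOccurs_tensorRep2_stdRep_e1 hl⟩
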